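/- Let n ≥ 3, let W = span(e₂,…,e_{n-1}) ⊆ ℝⁿ, and let θ : W → W be a linear map that has a real eigenvalue: there exist r ∈ ℝ and w₀ ∈ W with w₀ ≠ 0 and θ(w₀) = r·w₀. For (w, s) ∈ W × ℝ define g_{w,s}(x) = U_w(x) + θ(w) + s·e₁, where U_w(x) = x − xₙ w + (B(x,w) − xₙ B(w,w)/2) e₁. Then for every x ∈ ℝⁿ with xₙ = r, the stabilizer {(w,s) ∈ W × ℝ : g_{w,s}(x) = x} is an unbounded subset of W × ℝ; in particular the group H = {g_{w,s}} does not act properly on the hyperplane {x : xₙ = r}. -/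
import Mathlib


/- In this file `ℝⁿ` of the paper (with `n ≥ 3`) is encoded as `Fin (n + 3) → ℝ`
(the Lean parameter `n : ℕ` corresponds to the paper's `n - 3`); the subspace
`W = span(e₂,…,e_{n-1})` is the set of vectors with vanishing first and last
coordinates (indices `0` and `n + 2`). -/

/-- The Lorentzian bilinear form `B(x,y) = x₁yₙ + xₙy₁ + Σ_{i=2}^{n-1} xᵢyᵢ`;
note `B(x, e₁) = xₙ`. -/
noncomputable def bform (n : ℕ) (x y : Fin (n + 3) → ℝ) : ℝ :=
  x ⟨0, by omega⟩ * y ⟨n + 2, by omega⟩ + x ⟨n + 2, by omega⟩ * y ⟨0, by omega⟩ +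
    ∑ i : Fin (n + 3), if 1 ≤ i.val ∧ i.val ≤ n + 1 then x i * y i else 0

/-- The first standard basis vector `e₁`. -/
noncomputable def eOne (n : ℕ) : Fin (n + 3) → ℝ :=
  Pi.single (⟨0, by omega⟩ : Fin (n + 3)) (1 : ℝ)

/-- The unipotent linear map `U_w(x) = x - xₙ w + (B(x,w) - xₙ B(w,w)/2) e₁`. -/
noncomputable def uMap (n : ℕ) (w x : Fin (n + 3) → ℝ) : Fin (n + 3) → ℝ :=
  x - x ⟨n + 2, by omega⟩ • w +
    (bform n x w - x ⟨n + 2, by omega⟩ * bform n w w / 2) • eOne n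

/-- If `θ : W → W` has a real eigenvalue `r` (with eigenvector `w₀ ≠ 0`),
then for every `x` in the hyperplane `{x : xₙ = r}`, the stabilizer of `x` in the group
of affine maps `g_{w,s}(x) = U_w(x) + θ(w) + s e₁` is an unbounded subset of `W × ℝ`. -/
theorem stmt_18 (n : ℕ)
    (θ : (Fin (n + 3) → ℝ) →ₗ[ℝ] (Fin (n + 3) → ℝ))
    (hθW : ∀ w : Fin (n + 3) → ℝ, w ⟨0, by omega⟩ = 0 → w ⟨n + 2, by omega⟩ = 0 →
        θ w ⟨0, by omega⟩ = 0 ∧ θ w ⟨n + 2, by omega⟩ = 0)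
    (r : ℝ) (w₀ : Fin (n + 3) → ℝ) (hw₀ : w₀ ≠ 0)
    (hw₀0 : w₀ ⟨0, by omega⟩ = 0) (hw₀n : w₀ ⟨n + 2, by omega⟩ = 0)
    (heig : θ w₀ = r • w₀)
    (x : Fin (n + 3) → ℝ) (hx : x ⟨n + 2, by omega⟩ = r) :
    ¬ Bornology.IsBounded
        {p : (Fin (n + 3) → ℝ) × ℝ |
          (p.1 ⟨0, by omega⟩ = 0 ∧ p.1 ⟨n + 2, by omega⟩ = 0) ∧
            uMap n p.1 x + θ p.1 + p.2 • eOne n = x} := by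
  intro hB
  rw [isBounded_iff_forall_norm_le] at hB
  obtain ⟨R, hR⟩ := hB
  have hw : (0:ℝ) < ‖w₀‖ := norm_pos_iff.mpr hw₀
  set t : ℝ := (|R| + 1) / ‖w₀‖ with ht
  have htpos : 0 < t := by positivity
  set c : ℝ := bform n x (t • w₀) - x ⟨n + 2, by omega⟩ * bform n (t • w₀) (t • w₀) / 2
    with hc
  have hmem : ((t • w₀, -c) : (Fin (n + 3) → ℝ) × ℝ) ∈
      {p : (Fin (n + 3) → ℝ) × ℝ |
        (p.1 ⟨0, by omega⟩ = 0 ∧ p.1 ⟨n + 2, by omega⟩ = 0) ∧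
          uMap n p.1 x + θ p.1 + p.2 • eOne n = x} := by
    refine ⟨⟨by simp only [Pi.smul_apply, hw₀0, smul_zero],
      by simp only [Pi.smul_apply, hw₀n, smul_zero]⟩, ?_⟩
    have hθt : θ (t • w₀) = t • (r • w₀) := by rw [map_smul, heig]
    show uMap n (t • w₀) x + θ (t • w₀) + (-c) • eOne n = x
    rw [uMap, hθt, ← hc, hx]
    have hcomm : r • (t • w₀) = t • (r • w₀) := smul_comm r t w₀
    rw [hcomm]
    module
  have hle := hR _ hmem
  have h1 := norm_fst_le ((t • w₀, -c) : (Fin (n + 3) → ℝ) × ℝ)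
  rw [norm_smul, Real.norm_eq_abs, abs_of_pos htpos] at h1
  have h2 : t * ‖w₀‖ = |R| + 1 := by
    rw [ht, div_mul_cancel₀]
    exact ne_of_gt hw
  have : R ≤ |R| := le_abs_self R
  linarith
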